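/- arXiv:0905.2079 — 2 statements merged into one kernel-verified Lean document; each statement's English description precedes it below -/
import Mathlib

section
/- Let X be a real infinite-dimensional Banach space, m an even positive integer, 0 < q < 1 and r ≥ 1. If every continuous m-homogeneous polynomial P : X → ℝ is absolutely (q;r)-summing, then the identity operator on X is absolutely (mq/(1-q); r)-summing. -/
open scoped BigOperators

/-- The weak ℓ_r norm of a finite family in `X`: `sup_{‖φ‖ ≤ 1} (∑_j ‖φ(x_j)‖^r)^(1/r)`. -/
noncomputable def weakNorm (𝕜 : Type*) [RCLike 𝕜] {X : Type*} [NormedAddCommGroup X]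
    [NormedSpace 𝕜 X] (r : ℝ) {n : ℕ} (x : Fin n → X) : ℝ :=
  ⨆ φ : {φ : X →L[𝕜] 𝕜 // ‖φ‖ ≤ 1}, (∑ j, ‖(φ : X →L[𝕜] 𝕜) (x j)‖ ^ r) ^ (1 / r)

/-- A sequence `x` in `X` is weakly `r`-summable if `(φ(x_j))_j ∈ ℓ_r` for every `φ ∈ X*`. -/
def WeaklySummable (𝕜 : Type*) [RCLike 𝕜] {X : Type*} [NormedAddCommGroup X]
    [NormedSpace 𝕜 X] (r : ℝ) (x : ℕ → X) : Prop :=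
  ∀ φ : X →L[𝕜] 𝕜, Summable fun j => ‖φ (x j)‖ ^ r

/-- `P : X → ℝ` is a continuous `m`-homogeneous polynomial. -/
def IsHomogPoly {X : Type*} [NormedAddCommGroup X] [NormedSpace ℝ X] (m : ℕ) (P : X → ℝ) :
    Prop :=
  ∃ A : ContinuousMultilinearMap ℝ (fun _ : Fin m => X) ℝ, ∀ x, P x = A (fun _ => x)

/-!
Put `s = mq/(1-q)`, the exponent with `(s + m) q = s`. For a finite family `x` with
`T = ∑ ‖x_j‖^s` and norming functionals `φ_j`, the form `B = ∑_j (‖x_j‖^s / T) φ_j^m` has norm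
at most one, is nonnegative on the diagonal because `m` is even, and `B(x_j) ≥ ‖x_j‖^(s+m) / T`;
hence `(∑ |B(x_j)|^q)^(1/q) ≥ T^((1-q)/q) = ‖x‖_s^m`. So a single `(q;r)`-summing constant valid
for all such forms bounds the identity. Such a constant exists: if forms `B_k` of this kind had
constants beyond `4^k`, the form `∑ 2^(-k) B_k` would dominate every `2^(-k) B_k` on the diagonal
and could not be `(q;r)`-summing.
-/

noncomputable section

def lqNorm {ι : Type*} [Fintype ι] (q : ℝ) (f : ι → ℝ) : ℝ :=
  (∑ i, ‖f i‖ ^ q) ^ (1 / q)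

section lqNorm

variable {ι : Type*} [Fintype ι] {q : ℝ}

lemma lqNorm_mono (hq : 0 ≤ q) {f g : ι → ℝ} (h : ∀ i, ‖f i‖ ≤ ‖g i‖) :
    lqNorm q f ≤ lqNorm q g :=
  Real.rpow_le_rpow (by positivity)
    (Finset.sum_le_sum fun i _ => Real.rpow_le_rpow (norm_nonneg _) (h i) hq)
    (one_div_nonneg.2 hq)

lemma lqNorm_const_mul (hq : q ≠ 0) {c : ℝ} (hc : 0 ≤ c) (f : ι → ℝ) :
    lqNorm q (fun i => c * f i) = c * lqNorm q f := by
  simp only [lqNorm, norm_mul, Real.norm_of_nonneg hc,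
    Real.mul_rpow hc (norm_nonneg _), ← Finset.mul_sum]
  rw [Real.mul_rpow (by positivity) (by positivity), one_div, Real.rpow_rpow_inv hc hq]

end lqNorm

lemma weakNorm_nonneg (𝕜 : Type*) [RCLike 𝕜] {X : Type*} [NormedAddCommGroup X]
    [NormedSpace 𝕜 X] (r : ℝ) {n : ℕ} (x : Fin n → X) : 0 ≤ weakNorm 𝕜 r x :=
  Real.iSup_nonneg fun _ => by positivity

lemma le_rpow_inv_mul_of_pow_le_mul_pow {a b K : ℝ} {m : ℕ} (hm : m ≠ 0) (ha : 0 ≤ a)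
    (hb : 0 ≤ b) (hK : 0 ≤ K) (h : a ^ m ≤ K * b ^ m) : a ≤ K ^ (m⁻¹ : ℝ) * b := by
  rwa [← pow_le_pow_iff_left₀ ha (by positivity) hm, mul_pow, Real.rpow_inv_natCast_pow hK hm]

section Forms

variable {X : Type*} [NormedAddCommGroup X] [NormedSpace ℝ X] {m : ℕ}

def powForm (m : ℕ) (φ : X →L[ℝ] ℝ) : ContinuousMultilinearMap ℝ (fun _ : Fin m => X) ℝ :=
  (ContinuousMultilinearMap.mkPiAlgebra ℝ (Fin m) ℝ).compContinuousLinearMap fun _ => φ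

@[simp]
lemma powForm_apply (φ : X →L[ℝ] ℝ) (v : Fin m → X) : powForm m φ v = ∏ i, φ (v i) := by
  simp [powForm]

lemma norm_powForm_le (φ : X →L[ℝ] ℝ) : ‖powForm m φ‖ ≤ ‖φ‖ ^ m :=
  ContinuousMultilinearMap.opNorm_le_bound (by positivity) fun v => by
    rw [powForm_apply, norm_prod, ← Fin.prod_const, ← Finset.prod_mul_distrib]
    exact Finset.prod_le_prod (fun _ _ => norm_nonneg _) fun i _ => φ.le_opNorm (v i)

lemma exists_form_of_weights (hm : Even m) {n : ℕ} (x : Fin n → X) (w : Fin n → ℝ)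
    (hw : ∀ j, 0 ≤ w j) :
    ∃ B : ContinuousMultilinearMap ℝ (fun _ : Fin m => X) ℝ, ‖B‖ ≤ ∑ j, w j ∧
      (∀ v, 0 ≤ B fun _ => v) ∧ ∀ j, w j * ‖x j‖ ^ m ≤ B fun _ => x j := by
  choose φ hφ1 hφx using fun j => exists_dual_vector'' ℝ (x j)
  have hB : ∀ v, (∑ j, w j • powForm m (φ j)) (fun _ => v) = ∑ j, w j * φ j v ^ m := by
    simp
  refine ⟨∑ j, w j • powForm m (φ j), ?_, fun v => ?_, fun j => ?_⟩
  · refine (norm_sum_le _ _).trans (Finset.sum_le_sum fun j _ => ?_)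
    rw [norm_smul, Real.norm_of_nonneg (hw j)]
    exact mul_le_of_le_one_right (hw j)
      ((norm_powForm_le _).trans (pow_le_one₀ (norm_nonneg _) (hφ1 j)))
  · rw [hB]
    exact Finset.sum_nonneg fun j _ => mul_nonneg (hw j) (hm.pow_nonneg _)
  · rw [hB, ← show φ j (x j) = ‖x j‖ by simpa using hφx j]
    exact Finset.single_le_sum (f := fun i => w i * φ i (x j) ^ m)
      (fun i _ => mul_nonneg (hw i) (hm.pow_nonneg _)) (Finset.mem_univ j)

theorem exists_form_pow_lpNorm_le_lqNorm (hm : m ≠ 0) (hmeven : Even m) {q : ℝ} (hq0 : 0 < q)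
    (hq1 : q < 1) {n : ℕ} (x : Fin n → X) :
    ∃ B : ContinuousMultilinearMap ℝ (fun _ : Fin m => X) ℝ, ‖B‖ ≤ 1 ∧
      (∀ v, 0 ≤ B fun _ => v) ∧
      ((∑ j, ‖x j‖ ^ (m * q / (1 - q))) ^ ((1 - q) / (m * q))) ^ m ≤
        lqNorm q fun j => B fun _ => x j := by
  have h1q : 1 - q ≠ 0 := (sub_pos.2 hq1).ne'
  set s : ℝ := m * q / (1 - q) with hs_def
  set T := ∑ j, ‖x j‖ ^ s
  have hexp : ∀ a : ℝ, 0 ≤ a → ‖a ^ s * a ^ m‖ ^ q = a ^ s := fun a ha => by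
    rw [Real.norm_of_nonneg (by positivity), ← Real.rpow_natCast,
      ← Real.rpow_add' ha (by positivity), ← Real.rpow_mul ha]
    congr 1
    rw [hs_def]
    field_simp
    ring
  obtain ⟨B, hB1, hB0, hBx⟩ :=
    exists_form_of_weights hmeven x (fun j => ‖x j‖ ^ s / T) fun _ => by positivity
  refine ⟨B, hB1.trans ?_, hB0, ?_⟩
  · rw [← Finset.sum_div]
    exact div_self_le_one T
  calc (T ^ ((1 - q) / (m * q))) ^ m = T ^ (1 / q - 1) := by
        rw [← Real.rpow_natCast, ← Real.rpow_mul (by positivity)]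
        congr 1
        field_simp
    _ = T⁻¹ * lqNorm q fun j => ‖x j‖ ^ s * ‖x j‖ ^ m := by
        have hq1' : 1 / q - 1 ≠ 0 := by field_simp; exact div_ne_zero h1q hq0.ne'
        rw [Real.rpow_sub' (by positivity) hq1', Real.rpow_one, lqNorm,
          Finset.sum_congr rfl fun j _ => hexp _ (norm_nonneg (x j)), inv_mul_eq_div]
    _ = lqNorm q fun j => ‖x j‖ ^ s / T * ‖x j‖ ^ m := by
        rw [← lqNorm_const_mul hq0.ne' (by positivity)]
        simp only [div_eq_inv_mul, mul_assoc]
    _ ≤ lqNorm q fun j => B fun _ => x j := lqNorm_mono hq0.le fun j => by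
        rw [Real.norm_of_nonneg (by positivity), Real.norm_of_nonneg (hB0 _)]
        exact hBx j

theorem exists_uniform_bound_of_forall_bound {q : ℝ} (hq : 0 < q)
    (M : (n : ℕ) → (Fin n → X) → ℝ) (hM : ∀ n x, 0 ≤ M n x)
    (h : ∀ A : ContinuousMultilinearMap ℝ (fun _ : Fin m => X) ℝ, ∃ C : ℝ,
      ∀ (n : ℕ) (x : Fin n → X), lqNorm q (fun j => A fun _ => x j) ≤ C * M n x) :
    ∃ K : ℝ, 0 ≤ K ∧ ∀ B : ContinuousMultilinearMap ℝ (fun _ : Fin m => X) ℝ, ‖B‖ ≤ 1 →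
      (∀ v, 0 ≤ B fun _ => v) →
      ∀ (n : ℕ) (x : Fin n → X), lqNorm q (fun j => B fun _ => x j) ≤ K * M n x := by
  by_contra! hbad
  choose B hB1 hB0 n x hx using fun k : ℕ => hbad (4 ^ k) (by positivity)
  have hsum : Summable fun k => (2⁻¹ : ℝ) ^ k • B k :=
    .of_norm_bounded (summable_geometric_of_lt_one (r := 2⁻¹) (by norm_num) (by norm_num))
      fun k => by
        rw [norm_smul, norm_pow, norm_inv, Real.norm_two]
        exact mul_le_of_le_one_right (by positivity) (hB1 k)
  obtain ⟨C, hC⟩ := h (∑' k, (2⁻¹ : ℝ) ^ k • B k)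
  obtain ⟨k, hk⟩ := pow_unbounded_of_one_lt C (by norm_num : (1 : ℝ) < 2)
  have hdom : ∀ v, (2⁻¹ : ℝ) ^ k * B k (fun _ => v) ≤ (∑' i, (2⁻¹ : ℝ) ^ i • B i) fun _ => v :=
    fun v => by
      rw [ContinuousMultilinearMap.tsum_eval hsum]
      exact (ContinuousMultilinearMap.hasSum_eval hsum.hasSum _).summable.le_tsum k
        fun i _ => mul_nonneg (by positivity) (hB0 i v)
  have hglued : (2⁻¹ : ℝ) ^ k * lqNorm q (fun j => B k fun _ => x k j) ≤ C * M (n k) (x k) := by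
    rw [← lqNorm_const_mul hq.ne' (by positivity)]
    refine (lqNorm_mono hq.le fun j => ?_).trans (hC _ _)
    rw [Real.norm_of_nonneg (mul_nonneg (by positivity) (hB0 k _)),
      Real.norm_of_nonneg ((mul_nonneg (by positivity) (hB0 k _)).trans (hdom _))]
    exact hdom _
  have h4 : (2⁻¹ : ℝ) ^ k * 4 ^ k = 2 ^ k := by
    rw [← mul_pow]
    norm_num
  have := mul_lt_mul_of_pos_left (hx k) (by positivity : (0 : ℝ) < 2⁻¹ ^ k)
  rw [← mul_assoc, h4] at this
  nlinarith [hM (n k) (x k)]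

end Forms

end

theorem stmt9_general {X : Type*} [NormedAddCommGroup X] [NormedSpace ℝ X]
    (m : ℕ) (hm : 0 < m) (hmeven : Even m)
    (q r : ℝ) (hq0 : 0 < q) (hq1 : q < 1)
    (hsum : ∀ P : X → ℝ, IsHomogPoly m P →
      ∃ C : ℝ, 0 ≤ C ∧ ∀ (n : ℕ) (x : Fin n → X),
        (∑ j, ‖P (x j)‖ ^ q) ^ (1 / q) ≤ C * (weakNorm ℝ r x) ^ m) :
    ∃ C : ℝ, 0 ≤ C ∧ ∀ (n : ℕ) (x : Fin n → X),
      (∑ j, ‖x j‖ ^ (m * q / (1 - q))) ^ ((1 - q) / (m * q)) ≤ C * weakNorm ℝ r x := by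
  obtain ⟨K, hK0, hK⟩ := exists_uniform_bound_of_forall_bound hq0
    (fun _ x => weakNorm ℝ r x ^ m) (fun _ x => pow_nonneg (weakNorm_nonneg ℝ r x) m)
    fun A => let ⟨C, _, hC⟩ := hsum _ ⟨A, fun _ => rfl⟩; ⟨C, hC⟩
  refine ⟨K ^ (m⁻¹ : ℝ), by positivity, fun n x => ?_⟩
  obtain ⟨B, hB1, hB0, hBx⟩ := exists_form_pow_lpNorm_le_lqNorm hm.ne' hmeven hq0 hq1 x
  exact le_rpow_inv_mul_of_pow_le_mul_pow hm.ne' (by positivity) (weakNorm_nonneg ℝ r x) hK0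
    (hBx.trans (hK B hB1 hB0 n x))

/-- If every continuous `m`-homogeneous real polynomial (`m` even) is absolutely
`(q;r)`-summing, then `id_X` is absolutely `(mq/(1-q); r)`-summing. -/
theorem stmt9 {X : Type*} [NormedAddCommGroup X] [NormedSpace ℝ X] [CompleteSpace X]
    (hdim : ¬ FiniteDimensional ℝ X) (m : ℕ) (hm : 0 < m) (hmeven : Even m)
    (q r : ℝ) (hq0 : 0 < q) (hq1 : q < 1) (hr : 1 ≤ r)
    (hsum : ∀ P : X → ℝ, IsHomogPoly m P →
      ∃ C : ℝ, 0 ≤ C ∧ ∀ (n : ℕ) (x : Fin n → X),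
        (∑ j, ‖P (x j)‖ ^ q) ^ (1 / q) ≤ C * (weakNorm ℝ r x) ^ m) :
    ∃ C : ℝ, 0 ≤ C ∧ ∀ (n : ℕ) (x : Fin n → X),
      (∑ j, ‖x j‖ ^ (m * q / (1 - q))) ^ ((1 - q) / (m * q)) ≤ C * weakNorm ℝ r x :=
  stmt9_general m hm hmeven q r hq0 hq1 hsum
end

section
/- Let X be a Banach space such that every continuous bilinear form on X × X is 1-dominated. Then every bounded linear operator from X to its dual X* is absolutely 1-summing. -/
open scoped BigOperators

/-!
Given `u : X → X*` and a weakly 1-summable `(x_j)`, choose `‖z_j‖ ≤ 1` with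
`‖u x_j‖ ≤ 2 ‖u(x_j)(z_j)‖`. For every nonnegative `c ∈ ℓ₁` the sequence `y_j = c_j z_j` is
absolutely, hence weakly, 1-summable, so domination of `(x, y) ↦ u(x)(y)` gives
`∑ √(c_j ‖u x_j‖) < ∞`. This forces `∑ ‖u x_j‖ < ∞`: otherwise, with `t_j = ‖u x_j‖` and
`S_j = 1 + t_0 + ⋯ + t_j`, the choice `c_j = t_j / S_j² ≤ 1 / S_{j-1} - 1 / S_j` is summable
while `√(c_j t_j) = t_j / S_j` diverges by the Abel–Dini theorem.
-/

namespace AbelDini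

open Finset Filter

def onePlusSum (t : ℕ → ℝ) (n : ℕ) : ℝ := 1 + ∑ k ∈ range n, t k

variable {t : ℕ → ℝ}

lemma onePlusSum_succ (t : ℕ → ℝ) (n : ℕ) : onePlusSum t (n + 1) = onePlusSum t n + t n := by
  simp only [onePlusSum, sum_range_succ]; ring

lemma onePlusSum_pos (ht : ∀ n, 0 ≤ t n) (n : ℕ) : 0 < onePlusSum t n := by
  have : 0 ≤ ∑ k ∈ range n, t k := sum_nonneg fun k _ => ht k
  unfold onePlusSum; linarith

lemma onePlusSum_mono (ht : ∀ n, 0 ≤ t n) : Monotone (onePlusSum t) :=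
  monotone_nat_of_le_succ fun n => by rw [onePlusSum_succ]; linarith [ht n]

lemma tendsto_onePlusSum (ht : ∀ n, 0 ≤ t n) (hns : ¬ Summable t) :
    Tendsto (onePlusSum t) atTop atTop :=
  tendsto_atTop_add_const_left _ 1 ((not_summable_iff_tendsto_nat_atTop_of_nonneg ht).mp hns)

lemma div_onePlusSum_succ_sq_le (ht : ∀ n, 0 ≤ t n) (n : ℕ) :
    t n / onePlusSum t (n + 1) ^ 2 ≤ 1 / onePlusSum t n - 1 / onePlusSum t (n + 1) := by
  have h₀ := onePlusSum_pos ht n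
  have h₁ := onePlusSum_pos ht (n + 1)
  have telescope : 1 / onePlusSum t n - 1 / onePlusSum t (n + 1)
      = t n / (onePlusSum t n * onePlusSum t (n + 1)) := by
    rw [div_sub_div _ _ h₀.ne' h₁.ne', onePlusSum_succ]; ring
  rw [telescope, sq]
  exact div_le_div_of_nonneg_left (ht n) (by positivity)
    (mul_le_mul_of_nonneg_right (onePlusSum_mono ht n.le_succ) h₁.le)

theorem summable_div_onePlusSum_succ_sq (ht : ∀ n, 0 ≤ t n) :
    Summable fun n => t n / onePlusSum t (n + 1) ^ 2 := by
  refine summable_of_sum_range_le (c := 1) (fun n => div_nonneg (ht n) (sq_nonneg _)) fun m => ?_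
  calc ∑ n ∈ range m, t n / onePlusSum t (n + 1) ^ 2
      ≤ ∑ n ∈ range m, (1 / onePlusSum t n - 1 / onePlusSum t (n + 1)) :=
        sum_le_sum fun n _ => div_onePlusSum_succ_sq_le ht n
    _ = 1 - 1 / onePlusSum t m := by
        rw [sum_range_sub' (fun n => 1 / onePlusSum t n)]; simp [onePlusSum]
    _ ≤ 1 := by linarith [one_div_pos.mpr (onePlusSum_pos ht m)]

lemma one_sub_div_le_sum_Ico (ht : ∀ n, 0 ≤ t n) {N m : ℕ} (hNm : N ≤ m) :
    1 - onePlusSum t N / onePlusSum t m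
      ≤ ∑ n ∈ Ico N m, t n / onePlusSum t (n + 1) := by
  have hm := onePlusSum_pos ht m
  have hblock : ∑ n ∈ Ico N m, t n = onePlusSum t m - onePlusSum t N := by
    rw [sum_Ico_eq_sub _ hNm]; simp only [onePlusSum]; ring
  calc 1 - onePlusSum t N / onePlusSum t m = ∑ n ∈ Ico N m, t n / onePlusSum t m := by
        rw [← sum_div, hblock]; field_simp
    _ ≤ ∑ n ∈ Ico N m, t n / onePlusSum t (n + 1) := by
        refine sum_le_sum fun n hn => ?_
        exact div_le_div_of_nonneg_left (ht n) (onePlusSum_pos ht _)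
          (onePlusSum_mono ht (mem_Ico.mp hn).2)

/-- The Abel–Dini theorem. -/
theorem not_summable_div_onePlusSum_succ (ht : ∀ n, 0 ≤ t n) (hns : ¬ Summable t) :
    ¬ Summable fun n => t n / onePlusSum t (n + 1) := by
  intro hs
  obtain ⟨N, hN⟩ := Metric.cauchySeq_iff'.mp hs.hasSum.tendsto_sum_nat.cauchySeq (1 / 2)
    one_half_pos
  obtain ⟨m, hm, hNm⟩ :=
    ((tendsto_onePlusSum ht hns).eventually_ge_atTop (2 * onePlusSum t N)
      |>.and (eventually_ge_atTop N)).exists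
  have hblock := one_sub_div_le_sum_Ico ht hNm
  have hsmall := hN m hNm
  rw [Real.dist_eq, ← sum_Ico_eq_sub _ hNm] at hsmall
  have hratio : onePlusSum t N / onePlusSum t m ≤ 1 / 2 := by
    rw [div_le_iff₀ (onePlusSum_pos ht m)]; linarith
  linarith [le_abs_self (∑ n ∈ Ico N m, t n / onePlusSum t (n + 1))]

end AbelDini

theorem summable_of_forall_summable_sqrt_mul {t : ℕ → ℝ} (ht : ∀ n, 0 ≤ t n)
    (h : ∀ c : ℕ → ℝ, (∀ n, 0 ≤ c n) → Summable c → Summable fun n => √(c n * t n)) :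
    Summable t := by
  by_contra hns
  refine AbelDini.not_summable_div_onePlusSum_succ ht hns
    ((h _ (fun n => div_nonneg (ht n) (sq_nonneg _))
      (AbelDini.summable_div_onePlusSum_succ_sq ht)).congr fun n => ?_)
  rw [div_mul_eq_mul_div, ← sq, ← div_pow, Real.sqrt_sq
    (div_nonneg (ht n) (AbelDini.onePlusSum_pos ht _).le)]

lemma ContinuousLinearMap.exists_norm_le_one_opNorm_le_two_mul {𝕜 E F : Type*}
    [DenselyNormedField 𝕜] [NormedAddCommGroup E] [NormedSpace 𝕜 E] [SeminormedAddCommGroup F]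
    [NormedSpace 𝕜 F] (f : E →L[𝕜] F) : ∃ z : E, ‖z‖ ≤ 1 ∧ ‖f‖ ≤ 2 * ‖f z‖ := by
  rcases (norm_nonneg f).eq_or_lt with hf | hf
  · exact ⟨0, by simp [← hf]⟩
  · obtain ⟨z, hz, hfz⟩ := f.exists_lt_apply_of_lt_opNorm (half_lt_self hf)
    exact ⟨z, hz.le, by linarith⟩

lemma WeaklySummable.of_summable_norm_rpow {𝕜 X : Type*} [RCLike 𝕜] [NormedAddCommGroup X]
    [NormedSpace 𝕜 X] {r : ℝ} (hr : 0 ≤ r) {y : ℕ → X} (hy : Summable fun j => ‖y j‖ ^ r) :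
    WeaklySummable 𝕜 r y := fun φ =>
  (hy.mul_left (‖φ‖ ^ r)).of_nonneg_of_le (fun j => by positivity) fun j => by
    rw [← Real.mul_rpow (norm_nonneg _) (norm_nonneg _)]
    exact Real.rpow_le_rpow (norm_nonneg _) (φ.le_opNorm _) hr

theorem stmt17_general (𝕜 : Type*) [RCLike 𝕜] {X : Type*} [NormedAddCommGroup X] [NormedSpace 𝕜 X]
    (hdom : ∀ A : X →L[𝕜] X →L[𝕜] 𝕜, ∀ x y : ℕ → X,
      WeaklySummable 𝕜 1 x → WeaklySummable 𝕜 1 y →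
        Summable fun j => ‖A (x j) (y j)‖ ^ ((1 : ℝ) / 2)) :
    ∀ u : X →L[𝕜] (X →L[𝕜] 𝕜), ∀ x : ℕ → X, WeaklySummable 𝕜 1 x →
      Summable fun j => ‖u (x j)‖ := by
  intro u x hx
  refine summable_of_forall_summable_sqrt_mul (fun j => norm_nonneg _) fun c hc hcs => ?_
  choose z hz hnorming using fun j => (u (x j)).exists_norm_le_one_opNorm_le_two_mul
  set y : ℕ → X := fun j => (c j : 𝕜) • z j
  have hy : WeaklySummable 𝕜 1 y := by
    refine .of_summable_norm_rpow zero_le_one (hcs.of_nonneg_of_le (fun j => by positivity)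
      fun j => ?_)
    simp only [y, Real.rpow_one, norm_smul, RCLike.norm_ofReal, abs_of_nonneg (hc j)]
    exact mul_le_of_le_one_right (hc j) (hz j)
  refine ((hdom u x y hx hy).mul_left √2).of_nonneg_of_le (fun j => Real.sqrt_nonneg _)
    fun j => ?_
  have hpair : c j * ‖u (x j)‖ ≤ 2 * ‖u (x j) (y j)‖ := by
    simp only [y, map_smul, norm_smul, RCLike.norm_ofReal, abs_of_nonneg (hc j)]
    nlinarith [mul_le_mul_of_nonneg_left (hnorming j) (hc j)]
  calc √(c j * ‖u (x j)‖) ≤ √(2 * ‖u (x j) (y j)‖) := Real.sqrt_le_sqrt hpair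
    _ = √2 * ‖u (x j) (y j)‖ ^ ((1 : ℝ) / 2) := by
        rw [Real.sqrt_mul zero_le_two, Real.sqrt_eq_rpow ‖_‖]

/-- If every continuous bilinear form on `X × X` is 1-dominated, then every bounded linear
operator from `X` to its dual `X*` is absolutely 1-summing. -/
theorem stmt17 (𝕜 : Type*) [RCLike 𝕜] {X : Type*} [NormedAddCommGroup X] [NormedSpace 𝕜 X]
    [CompleteSpace X]
    (hdom : ∀ A : X →L[𝕜] X →L[𝕜] 𝕜, ∀ x y : ℕ → X,
      WeaklySummable 𝕜 1 x → WeaklySummable 𝕜 1 y →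
        Summable fun j => ‖A (x j) (y j)‖ ^ ((1 : ℝ) / 2)) :
    ∀ u : X →L[𝕜] (X →L[𝕜] 𝕜), ∀ x : ℕ → X, WeaklySummable 𝕜 1 x →
      Summable fun j => ‖u (x j)‖ :=
  stmt17_general 𝕜 hdom
end
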